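/- Let n be an even positive integer, V a real n×n circulant symmetric positive definite matrix, p a real number, P = I_{n/2} ⊕ (−I_{n/2}), and Q = V^{−p} P V^{p} P with block form Q = [[Q', Q''], [Q'', Q']] (n/2 × n/2 blocks), F = F_{n/2}. Then (Q' + Q''F)(Q' − Q''F) = I_{n/2}, i.e. Q' + Q''F is the inverse of Q' − Q''F. -/

import Mathlib

open Matrix

/-!
Write `Q = [[A, B], [C, D]]` in `m × m` blocks and `F = F_m`. Since `P² = 1`, the definition of `Q`
gives `Q P Q = P`, whose first block row says `A² - B C = 1` and `A B = B D`. The flip `J = F_{2m}`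
commutes with the symmetric circulant `V`, hence with every `V^s`, and anticommutes with `P`, so it
commutes with `Q`; blockwise `F A = D F` and `F B = C F`. Then
`(A + B F)(A - B F) = A² - B C + (B D - A B) F = 1`.
-/

/-- The `m × m` flip matrix `F_m`: with 0-based indices, entry `(i,j)` is `1`
iff `i + j = m - 1`. -/
noncomputable def flipMat (m : ℕ) : Matrix (Fin m) (Fin m) ℝ :=
  Matrix.of fun i j => if (i : ℕ) + (j : ℕ) = m - 1 then 1 else 0

noncomputable def mpow {k : ℕ} (M : Matrix (Fin k) (Fin k) ℝ) (p : ℝ) :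
    Matrix (Fin k) (Fin k) ℝ :=
  cfc (fun x : ℝ => x ^ p) M

theorem conj_involution_mul_mul_self {M : Type*} [Monoid M] {w w' s : M} (hw : w * w' = 1)
    (hw' : w' * w = 1) (hs : s * s = 1) : (w' * s * w * s) * s * (w' * s * w * s) = s := by
  have cancel : ∀ {a b : M}, a * b = 1 → ∀ x, x * a * b = x := fun h x => by
    rw [mul_assoc, h, mul_one]
  simp [← mul_assoc, cancel hs, cancel hw, hw']

section Ring

variable {R : Type*} [Ring R]

theorem Commute.mul_mul_of_anticommute {j s w : R} (hjs : j * s = -(s * j))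
    (hjw : Commute j w) : Commute j (s * w * s) :=
  calc j * (s * w * s) = j * s * w * s := by noncomm_ring
    _ = -(s * (j * w) * s) := by rw [hjs]; noncomm_ring
    _ = -(s * w * (j * s)) := by rw [hjw.eq]; noncomm_ring
    _ = s * w * s * j := by rw [hjs]; noncomm_ring

theorem add_mul_mul_sub_mul_eq_one {a b c d f : R} (hf : f * f = 1) (hfa : f * a = d * f)
    (hfb : f * b = c * f) (h₁ : a * a - b * c = 1) (h₂ : a * b = b * d) :
    (a + b * f) * (a - b * f) = 1 :=
  calc (a + b * f) * (a - b * f) = a * a - a * b * f + b * (f * a) - b * (f * b) * f := by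
        noncomm_ring
    _ = a * a - a * b * f + b * d * f - b * c * (f * f) := by rw [hfa, hfb]; noncomm_ring
    _ = 1 := by rw [← h₂, hf, mul_one, sub_add_cancel, h₁]

end Ring

namespace Matrix

section Blocks

variable {n R : Type*} [Fintype n] [DecidableEq n] [Ring R]

theorem fromBlocks_antidiagonal_mul_fromBlocks_one_neg_one (F : Matrix n n R) :
    fromBlocks 0 F F 0 * fromBlocks 1 0 0 (-1) =
      -(fromBlocks 1 0 0 (-1) * fromBlocks 0 F F 0) := by
  simp [fromBlocks_multiply, fromBlocks_neg]

theorem toBlocks_add_mul_sub_eq_one {M : Matrix (n ⊕ n) (n ⊕ n) R} {F : Matrix n n R}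
    (hF : F * F = 1) (hM : M * fromBlocks 1 0 0 (-1) * M = fromBlocks 1 0 0 (-1))
    (hFM : Commute (fromBlocks 0 F F 0) M) :
    (M.toBlocks₁₁ + M.toBlocks₁₂ * F) * (M.toBlocks₁₁ - M.toBlocks₁₂ * F) = 1 := by
  rw [← fromBlocks_toBlocks M] at hM hFM
  simp only [fromBlocks_multiply, Commute, SemiconjBy, mul_one, mul_zero, add_zero, mul_neg,
    zero_add, neg_mul, zero_mul, fromBlocks_inj] at hM hFM
  obtain ⟨h₁, h₂, -, -⟩ := hM
  obtain ⟨-, -, hfa, hfb⟩ := hFM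
  exact add_mul_mul_sub_mul_eq_one hF hfa hfb (by rwa [← sub_eq_add_neg] at h₁)
    (by rwa [← sub_eq_add_neg, sub_eq_zero] at h₂)

end Blocks

end Matrix

theorem flipMat_apply_eq_ite (k : ℕ) (i j : Fin k) :
    flipMat k i j = if j = i.rev then 1 else 0 := by
  simp only [flipMat, of_apply, Fin.ext_iff, Fin.val_rev]
  congr 1
  grind

theorem flipMat_mul {k l : ℕ} (M : Matrix (Fin k) (Fin l) ℝ) :
    flipMat k * M = M.submatrix Fin.rev id := by
  ext i j
  simp [mul_apply, flipMat_apply_eq_ite]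

theorem mul_flipMat {k l : ℕ} (M : Matrix (Fin l) (Fin k) ℝ) :
    M * flipMat k = M.submatrix id Fin.rev := by
  ext i j
  have hrev : ∀ x : Fin k, j = x.rev ↔ x = j.rev := fun x => by rw [eq_comm, Fin.rev_eq_iff]
  simp [mul_apply, flipMat_apply_eq_ite, hrev]

theorem flipMat_mul_flipMat (k : ℕ) : flipMat k * flipMat k = 1 := by
  ext i j
  simp [flipMat_mul, flipMat_apply_eq_ite, one_apply, eq_comm]

theorem commute_flipMat_circulant {k : ℕ} {v : Fin k → ℝ} (hv : ∀ l, v (-l) = v l) :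
    Commute (flipMat k) (circulant v) := by
  obtain _ | k := k
  -- `Fin 0` is no additive group, but all matrices over it are equal
  · exact Subsingleton.elim _ _
  show _ = _
  ext i j
  simp only [flipMat_mul, mul_flipMat, submatrix_apply, circulant_apply, id]
  rw [← Fin.rev_add, ← neg_sub, ← Fin.rev_add, add_comm j i, hv]

theorem reindex_flipMat_add (m : ℕ) :
    reindex finSumFinEquiv.symm finSumFinEquiv.symm (flipMat (m + m)) =
      fromBlocks 0 (flipMat m) (flipMat m) 0 := by
  ext (i | i) (j | j) <;> simp [flipMat] <;> grind

theorem reindex_diagonal_sign (m : ℕ) :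
    reindex finSumFinEquiv.symm finSumFinEquiv.symm
        (diagonal fun i : Fin (m + m) => if (i : ℕ) < m then (1 : ℝ) else -1) =
      fromBlocks 1 0 0 (-1) := by
  ext (i | i) (j | j) <;> simp [diagonal_apply, one_apply, Fin.ext_iff, apply_ite] <;> omega

theorem mpow_neg_mul_mpow {k : ℕ} {V : Matrix (Fin k) (Fin k) ℝ} (hV : V.PosDef) (p : ℝ) :
    mpow V (-p) * mpow V p = 1 := by
  open scoped MatrixOrder in
  have hV' := hV.isStrictlyPositive
  rw [mpow, mpow, ← CFC.rpow_eq_cfc_real, ← CFC.rpow_eq_cfc_real]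
  exact CFC.rpow_neg_mul_rpow p

theorem mpow_mul_mpow_neg {k : ℕ} {V : Matrix (Fin k) (Fin k) ℝ} (hV : V.PosDef) (p : ℝ) :
    mpow V p * mpow V (-p) = 1 := by
  simpa using mpow_neg_mul_mpow hV (-p)

theorem Commute.mpow_right {k : ℕ} {J V : Matrix (Fin k) (Fin k) ℝ} (h : Commute J V)
    (p : ℝ) : Commute J (mpow V p) :=
  (h.symm.cfc_real _).symm

theorem Q_blocks_mutually_inverse_general
    (m : ℕ)
    (v : Fin (m + m) → ℝ) (hv : ∀ l, v (-l) = v l)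
    (V : Matrix (Fin (m + m)) (Fin (m + m)) ℝ) (hV : V = Matrix.circulant v)
    (hVpd : V.PosDef)
    (p : ℝ)
    (P : Matrix (Fin (m + m)) (Fin (m + m)) ℝ)
    (hP : P = Matrix.diagonal (fun i : Fin (m + m) => if (i : ℕ) < m then (1 : ℝ) else -1))
    (Q : Matrix (Fin (m + m)) (Fin (m + m)) ℝ)
    (hQ : Q = mpow V (-p) * P * mpow V p * P)
    (Q₁ Q₂ : Matrix (Fin m) (Fin m) ℝ)
    (hQ₁ : ∀ i j, Q₁ i j = Q (Fin.castAdd m i) (Fin.castAdd m j))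
    (hQ₂ : ∀ i j, Q₂ i j = Q (Fin.castAdd m i) (Fin.natAdd m j)) :
    (Q₁ + Q₂ * flipMat m) * (Q₁ - Q₂ * flipMat m) = 1 := by
  set ρ := reindexAlgEquiv ℝ ℝ (finSumFinEquiv (m := m) (n := m)).symm
  set J := flipMat (m + m)
  have hρP : ρ P = fromBlocks 1 0 0 (-1) := hP ▸ reindex_diagonal_sign m
  have hρJ : ρ J = fromBlocks 0 (flipMat m) (flipMat m) 0 := reindex_flipMat_add m
  have hPP : P * P = 1 := ρ.injective (by simp [hρP, fromBlocks_multiply])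
  have hJP : J * P = -(P * J) := ρ.injective <| by
    rw [map_mul, map_neg, map_mul, hρP, hρJ, fromBlocks_antidiagonal_mul_fromBlocks_one_neg_one]
  have hQPQ : Q * P * Q = P :=
    hQ ▸ conj_involution_mul_mul_self (mpow_mul_mpow_neg hVpd p) (mpow_neg_mul_mpow hVpd p) hPP
  have hJQ : Commute J Q := by
    have hJV : Commute J V := hV ▸ commute_flipMat_circulant hv
    rw [hQ, mul_assoc, mul_assoc, ← mul_assoc P]
    exact (hJV.mpow_right _).mul_right ((hJV.mpow_right p).mul_mul_of_anticommute hJP)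
  obtain rfl : Q₁ = (ρ Q).toBlocks₁₁ := by ext i j; exact hQ₁ i j
  obtain rfl : Q₂ = (ρ Q).toBlocks₁₂ := by ext i j; exact hQ₂ i j
  refine toBlocks_add_mul_sub_eq_one (flipMat_mul_flipMat m) ?_ (hρJ ▸ hJQ.map ρ)
  rw [← hρP, ← map_mul, ← map_mul, hQPQ]

/-- For `V` circulant symmetric positive definite and
`Q = V^{-p} P V^{p} P` with blocks `[[Q', Q''], [Q'', Q']]`, one has
`(Q' + Q''F)(Q' - Q''F) = I`, i.e. `Q' + Q''F` is the inverse of `Q' - Q''F`. -/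
theorem Q_blocks_mutually_inverse
    (m : ℕ) (hm : 0 < m)
    (v : Fin (m + m) → ℝ) (hv : ∀ l, v (-l) = v l)
    (V : Matrix (Fin (m + m)) (Fin (m + m)) ℝ) (hV : V = Matrix.circulant v)
    (hVpd : V.PosDef)
    (p : ℝ)
    (P : Matrix (Fin (m + m)) (Fin (m + m)) ℝ)
    (hP : P = Matrix.diagonal (fun i : Fin (m + m) => if (i : ℕ) < m then (1 : ℝ) else -1))
    (Q : Matrix (Fin (m + m)) (Fin (m + m)) ℝ)
    (hQ : Q = mpow V (-p) * P * mpow V p * P)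
    (Q₁ Q₂ : Matrix (Fin m) (Fin m) ℝ)
    (hQ₁ : ∀ i j, Q₁ i j = Q (Fin.castAdd m i) (Fin.castAdd m j))
    (hQ₂ : ∀ i j, Q₂ i j = Q (Fin.castAdd m i) (Fin.natAdd m j)) :
    (Q₁ + Q₂ * flipMat m) * (Q₁ - Q₂ * flipMat m) = 1 :=
  Q_blocks_mutually_inverse_general m v hv V hV hVpd p P hP Q hQ Q₁ Q₂ hQ₁ hQ₂
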